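/- arXiv:1406.5663 — 2 statements merged into one kernel-verified Lean document; each statement's English description precedes it below -/
import Mathlib

section
/- Let H be a real symmetric d×d matrix with an orthonormal basis of eigenvectors v₁, …, v_d corresponding to eigenvalues λ₁ ≥ λ₂ ≥ … ≥ λ_d, and assume λ₂ < 0 and λ₁ > λ₂. Let e₁ be a unit vector satisfying ⟨v₁, e₁⟩² > λ₁/(λ₁ − λ₂). Then for every nonzero vector u orthogonal to e₁ one has uᵀ H u < 0; that is, H is negative definite on the hyperplane orthogonal to e₁. (Core of Lemma 4: the eigen-gap condition (v₁ᵀe₁)² > λ₁/(λ₁−λ₂) forces the Hessian to be negative definite on the subspace 𝕃 = e₁⊥.) -/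
/-!
Write `u = ∑ cᵢ vᵢ` in the eigenbasis, so `uᵀHu = ∑ λᵢ cᵢ²` and `‖u‖² = ∑ cᵢ²`. Since `λᵢ ≤ λ₂`
for `i ≥ 2`, `uᵀHu ≤ (λ₁ - λ₂) c₁² + λ₂ ‖u‖²`. If `u ⊥ e₁`, then `c₁ = ⟨v₁ - ⟨v₁, e₁⟩ e₁, u⟩`,
and Cauchy–Schwarz gives `c₁² ≤ (1 - ⟨v₁, e₁⟩²) ‖u‖²`. Hence
`uᵀHu ≤ (λ₁ - ⟨v₁, e₁⟩² (λ₁ - λ₂)) ‖u‖²`, and the alignment condition makes the factor negative.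
-/

open Matrix

section Orthonormal

variable {ι : Type*} [Fintype ι] [DecidableEq ι] {v : ι → ι → ℝ}

theorem eq_sum_dotProduct_smul_of_orthonormal
    (horth : ∀ i j, v i ⬝ᵥ v j = if i = j then 1 else 0) (u : ι → ℝ) :
    u = ∑ i, (v i ⬝ᵥ u) • v i := by
  have hVVt : of v * (of v)ᵀ = 1 := by
    ext i j
    simpa [mul_apply, one_apply, dotProduct] using horth i j
  calc u = (u ᵥ* (of v)ᵀ) ᵥ* of v := by
        rw [vecMul_vecMul, mul_eq_one_comm.mp hVVt, vecMul_one]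
    _ = ∑ i, (v i ⬝ᵥ u) • v i := by
        rw [vecMul_eq_sum]
        congr! 2 with i
        simp [vecMul, dotProduct_comm]

theorem dotProduct_mulVec_eq_sum_eigenvalue_mul_sq
    (horth : ∀ i j, v i ⬝ᵥ v j = if i = j then 1 else 0)
    {H : Matrix ι ι ℝ} {lam : ι → ℝ} (heig : ∀ i, H *ᵥ v i = lam i • v i) (u : ι → ℝ) :
    u ⬝ᵥ H *ᵥ u = ∑ i, lam i * (v i ⬝ᵥ u) ^ 2 := by
  nth_rw 2 [eq_sum_dotProduct_smul_of_orthonormal horth u]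
  simp only [mulVec_sum, mulVec_smul, heig, smul_smul, dotProduct_sum, dotProduct_smul,
    smul_eq_mul]
  exact Finset.sum_congr rfl fun i _ => by rw [dotProduct_comm]; ring

theorem dotProduct_self_eq_sum_sq_of_orthonormal
    (horth : ∀ i j, v i ⬝ᵥ v j = if i = j then 1 else 0) (u : ι → ℝ) :
    u ⬝ᵥ u = ∑ i, (v i ⬝ᵥ u) ^ 2 := by
  simpa using dotProduct_mulVec_eq_sum_eigenvalue_mul_sq horth (H := 1) (lam := 1)
    (by simp) u

end Orthonormal

theorem sq_dotProduct_le_of_dotProduct_eq_zero {n : Type*} [Fintype n] {e w u : n → ℝ}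
    (he : e ⬝ᵥ e = 1) (hu : e ⬝ᵥ u = 0) :
    (w ⬝ᵥ u) ^ 2 ≤ (w ⬝ᵥ w - (w ⬝ᵥ e) ^ 2) * (u ⬝ᵥ u) := by
  set p := w - (w ⬝ᵥ e) • e
  have hpu : p ⬝ᵥ u = w ⬝ᵥ u := by simp [p, sub_dotProduct, hu]
  have hpp : p ⬝ᵥ p = w ⬝ᵥ w - (w ⬝ᵥ e) ^ 2 := by
    simp only [p, sub_dotProduct, dotProduct_sub, smul_dotProduct, dotProduct_smul, he,
      smul_eq_mul, dotProduct_comm e w]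
    ring
  rw [← hpu, ← hpp]
  simpa [dotProduct, sq] using Finset.sum_mul_sq_le_sq_mul_sq Finset.univ p u

theorem sum_mul_le_of_forall_ne_le {ι : Type*} [Fintype ι] [DecidableEq ι]
    {lam x : ι → ℝ} {b : ℝ} (i₀ : ι) (hlam : ∀ i ≠ i₀, lam i ≤ b) (hx : ∀ i, 0 ≤ x i) :
    ∑ i, lam i * x i ≤ lam i₀ * x i₀ + b * (∑ i, x i - x i₀) := by
  rw [← Finset.add_sum_erase _ _ (Finset.mem_univ i₀), ← Finset.sum_erase_eq_sub
    (Finset.mem_univ i₀), Finset.mul_sum]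
  gcongr with i hi
  · exact hx i
  · exact hlam i (Finset.ne_of_mem_erase hi)

theorem sub_mul_sub_neg_of_div_lt {a b s : ℝ} (hb : b < 0) (hba : b ≤ a)
    (h : a / (a - b) < s) : a - s * (a - b) < 0 := by
  -- for `a = b` the quotient is `0` by convention, and the claim is `b < 0`
  rcases hba.eq_or_lt with rfl | hlt
  · simpa using hb
  · have := (div_lt_iff₀ (sub_pos.mpr hlt)).mp h
    linarith

/-- Core of Lemma 4: if `λ₂ < 0 < λ₁ - λ₂` and the unit vector `e₁` satisfies
`⟨v₁, e₁⟩² > λ₁ / (λ₁ − λ₂)`, then the symmetric matrix `H` is negative definite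
on the hyperplane orthogonal to `e₁`. -/
theorem stmt7 (d : ℕ) (hd : 2 ≤ d) (H : Matrix (Fin d) (Fin d) ℝ)
    (v : Fin d → (Fin d → ℝ)) (lam : Fin d → ℝ)
    (horth : ∀ i j : Fin d, v i ⬝ᵥ v j = if i = j then 1 else 0)
    (heig : ∀ i : Fin d, H.mulVec (v i) = lam i • v i)
    (hmono : Antitone lam)
    (hlam2 : lam ⟨1, by omega⟩ < 0)
    (e1 : Fin d → ℝ) (he1 : e1 ⬝ᵥ e1 = 1)
    (halign : (v ⟨0, by omega⟩ ⬝ᵥ e1) ^ 2 >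
      lam ⟨0, by omega⟩ / (lam ⟨0, by omega⟩ - lam ⟨1, by omega⟩)) :
    ∀ u : Fin d → ℝ, u ≠ 0 → e1 ⬝ᵥ u = 0 → u ⬝ᵥ H.mulVec u < 0 := by
  intro u hu hperp
  set i₀ : Fin d := ⟨0, by omega⟩
  set i₁ : Fin d := ⟨1, by omega⟩
  set c : Fin d → ℝ := fun i => v i ⬝ᵥ u
  set a := v i₀ ⬝ᵥ e1
  have hnorm : u ⬝ᵥ u = ∑ i, c i ^ 2 := dotProduct_self_eq_sum_sq_of_orthonormal horth u
  have hpos : 0 < u ⬝ᵥ u := by simpa using dotProduct_star_self_pos_iff.mpr hu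
  have hlam₀₁ : lam i₁ ≤ lam i₀ := hmono (Nat.zero_le 1)
  have hlam : ∀ i ≠ i₀, lam i ≤ lam i₁ := fun i hi =>
    hmono (Nat.one_le_iff_ne_zero.mpr fun h => hi (Fin.ext h))
  have hc₀ : c i₀ ^ 2 ≤ (1 - a ^ 2) * (u ⬝ᵥ u) := by
    simpa [horth, c, a] using sq_dotProduct_le_of_dotProduct_eq_zero (w := v i₀) he1 hperp
  rw [dotProduct_mulVec_eq_sum_eigenvalue_mul_sq horth heig]
  calc ∑ i, lam i * c i ^ 2
      ≤ lam i₀ * c i₀ ^ 2 + lam i₁ * (∑ i, c i ^ 2 - c i₀ ^ 2) :=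
        sum_mul_le_of_forall_ne_le i₀ hlam fun i => sq_nonneg (c i)
    _ = (lam i₀ - lam i₁) * c i₀ ^ 2 + lam i₁ * (u ⬝ᵥ u) := by rw [hnorm]; ring
    _ ≤ (lam i₀ - lam i₁) * ((1 - a ^ 2) * (u ⬝ᵥ u)) + lam i₁ * (u ⬝ᵥ u) := by gcongr
    _ = (lam i₀ - a ^ 2 * (lam i₀ - lam i₁)) * (u ⬝ᵥ u) := by ring
    _ < 0 := mul_neg_of_neg_of_pos (sub_mul_sub_neg_of_div_lt hlam2 hlam₀₁ halign) hpos
end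

section
/- Let R₁ and R₂ be two nonempty compact subsets of ℝ^d, each of which is a closed non-self-intersecting curve, i.e. the image of a continuous injective map from the circle into ℝ^d. Suppose r₁, r₂ > 0 are such that every point z ∈ ℝ^d with d(z, R₁) ≤ r₁ has a unique nearest point in R₁, and every point z with d(z, R₂) ≤ r₂ has a unique nearest point in R₂ (so R₁ and R₂ have reach at least r₁ and r₂ respectively). If Haus(R₁, R₂) < (2 − √2) · min{r₁, r₂}, then dist_Π(R₂, R₁) = dist_Π(R₁, R₂) = Haus(R₁, R₂). (Lemma 7: for two closed curves with positive reach that are sufficiently close in Hausdorff distance, the quasi-Hausdorff distances in both directions agree with the Hausdorff distance.) -/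
/-!
Write `δ = dist_Π(R₁, R₂)` and `ε = dist_Π(R₂, R₁)`; by symmetry it suffices to show `ε ≤ δ`.
Both are below the reach, so the nearest-point projections `A : R₂ → R₁` and `B : R₁ → R₂` are
continuous. Each point of `R₂` moves by at most `δ + ε` under `B ∘ A`, so projecting the straight
segments onto `R₂` gives a homotopy from the identity of `R₂` to `B ∘ A`. If some `x₀ ∈ R₁` had
`d(x₀, R₂) > δ`, then `x₀` would not be in the image of `A`; a map into a circle that misses a point
lifts through `exp : ℝ → S¹` and is therefore nullhomotopic, so the identity of the circle `R₂`
would be nullhomotopic, which the homotopy lifting property of `exp` rules out.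
-/

open Metric

/-- The quasi-Hausdorff distance `dist_Π(A, B) = sup_{x ∈ B} d(x, A)`. -/
noncomputable def distPi {d : ℕ} (A B : Set (EuclideanSpace ℝ (Fin d))) : ℝ :=
  ⨆ x ∈ B, Metric.infDist x A

/-- The Hausdorff distance `Haus(A, B) = max{dist_Π(A, B), dist_Π(B, A)}`. -/
noncomputable def hausDist {d : ℕ} (A B : Set (EuclideanSpace ℝ (Fin d))) : ℝ :=
  max (distPi A B) (distPi B A)

open Filter Topology

namespace Circle

theorem not_exists_lift_id : ¬ ∃ θ : C(Circle, ℝ), ∀ z, exp (θ z) = z := by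
  rintro ⟨θ, hθ⟩
  -- `t ↦ θ (exp t) - θ 1` and `id` are lifts of `exp` through the covering `exp` agreeing at `0`
  have hlift : (fun t => θ (exp t) - θ 1) = id := by
    refine isCoveringMap_exp.eq_of_comp_eq (by fun_prop) continuous_id ?_ 0 (by simp)
    ext1 t
    simp [exp_sub, hθ]
  have h2π := congrFun hlift (2 * Real.pi)
  simp only [exp_two_pi, sub_self, id] at h2π
  exact Real.pi_ne_zero (by linarith)

variable {X : Type*} [TopologicalSpace X]

theorem exists_lift_of_homotopic {f₀ f₁ : C(X, Circle)} (F : f₀.Homotopy f₁) (θ₀ : C(X, ℝ))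
    (hθ₀ : ∀ x, exp (θ₀ x) = f₀ x) : ∃ θ₁ : C(X, ℝ), ∀ x, exp (θ₁ x) = f₁ x := by
  have hF₀ : ∀ x, F.toContinuousMap (0, x) = exp (θ₀ x) := by simp [hθ₀]
  refine ⟨(isCoveringMap_exp.liftHomotopy _ θ₀ hF₀).comp (.prodMk (.const X 1) (.id X)),
    fun x => ?_⟩
  exact (congrFun (isCoveringMap_exp.liftHomotopy_lifts _ _ hF₀) (1, x)).trans (F.apply_one x)

theorem not_contractibleSpace : ¬ ContractibleSpace Circle := by
  intro h
  obtain ⟨c, ⟨F⟩⟩ := (contractible_iff_id_nullhomotopic Circle).1 h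
  obtain ⟨θ, hθ⟩ := exists_lift_of_homotopic F.symm (.const Circle (Complex.arg c)) (by simp)
  exact not_exists_lift_id ⟨θ, hθ⟩

theorem coe_mem_slitPlane {u : Circle} (hu : u ≠ -1) : (u : ℂ) ∈ Complex.slitPlane := by
  refine Complex.mem_slitPlane_iff_arg.2 ⟨fun harg => hu ?_, u.coe_ne_zero⟩
  rw [← exp_arg u, harg]
  ext1
  simp [coe_exp, Complex.exp_pi_mul_I]

theorem nullhomotopic_of_forall_ne (f : C(X, Circle)) {w : Circle} (hw : ∀ x, f x ≠ w) :
    f.Nullhomotopic := by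
  -- `f = -w * u` where `u` avoids `-1`, the branch cut of `arg`, so `f` lifts through `exp`
  let u : C(X, Circle) := ⟨fun x => -(f x / w), by fun_prop⟩
  have hu : ∀ x, u x ≠ -1 := fun x h => hw x (by simpa [u, div_eq_one] using h)
  let θ : C(X, ℝ) := ⟨fun x => Complex.arg (-w : Circle) + Complex.arg (u x), by
    refine continuous_const.add (continuous_iff_continuousAt.2 fun x => ?_)
    exact (Complex.continuousAt_arg (coe_mem_slitPlane (hu x))).comp (f := fun x => (u x : ℂ))
      (by fun_prop)⟩
  have hθ : exp.comp θ = f := by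
    ext1 x
    simp only [θ, ContinuousMap.comp_apply, ContinuousMap.coe_mk, exp_add, exp_arg, u]
    ext1
    simp only [coe_mul, coe_neg, coe_div]
    field_simp
  rw [← hθ]
  exact (id_nullhomotopic ℝ).comp_left θ |>.comp_right exp

end Circle

noncomputable def Circle.homeomorphSphere : Circle ≃ₜ sphere (0 : EuclideanSpace ℝ (Fin 2)) 1 :=
  Complex.orthonormalBasisOneI.repr.toHomeomorph.subtype fun z => by
    simp [Submonoid.unitSphere]

theorem nonempty_homeomorph_circle_of_range {Y : Type*} [TopologicalSpace Y] [T2Space Y]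
    {R : Set Y} (h : ∃ f : sphere (0 : EuclideanSpace ℝ (Fin 2)) 1 → Y,
      Continuous f ∧ Function.Injective f ∧ R = Set.range f) : Nonempty (R ≃ₜ Circle) := by
  obtain ⟨f, hf, hinj, rfl⟩ := h
  exact ⟨(Circle.homeomorphSphere.trans (hf.isClosedEmbedding hinj).toHomeomorph).symm⟩

theorem not_homotopic_id_of_forall_ne {X Y : Type*} [TopologicalSpace X] [TopologicalSpace Y]
    (eX : X ≃ₜ Circle) (eY : Y ≃ₜ Circle) (f : C(X, Y)) (g : C(Y, X)) {y₀ : Y}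
    (hf : ∀ x, f x ≠ y₀) : ¬ (g.comp f).Homotopic (.id X) := by
  intro hgf
  have hf_null : f.Nullhomotopic := by
    have := (Circle.nullhomotopic_of_forall_ne ((eY : C(Y, Circle)).comp f) (w := eY y₀)
      fun x => eY.injective.ne (hf x)).comp_right (eY.symm : C(Circle, Y))
    simpa [← ContinuousMap.comp_assoc] using this
  obtain ⟨c, hc⟩ := hf_null.comp_right g
  have : ContractibleSpace X := (contractible_iff_id_nullhomotopic X).2 ⟨c, hgf.symm.trans hc⟩
  exact Circle.not_contractibleSpace (eX.contractibleSpace_iff.1 this)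

section MetricSpace

variable {α : Type*} [MetricSpace α]

def HasReachAtLeast (A : Set α) (r : ℝ) : Prop :=
  ∀ z, infDist z A ≤ r → ∃! y, y ∈ A ∧ dist z y = infDist z A

namespace HasReachAtLeast

variable {A : Set α} {r : ℝ} (h : HasReachAtLeast A r)

noncomputable def proj (z : {z // infDist z A ≤ r}) : A :=
  ⟨(h z z.2).exists.choose, (h z z.2).exists.choose_spec.1⟩

theorem dist_proj (z : {z // infDist z A ≤ r}) : dist (z : α) (h.proj z) = infDist (z : α) A :=
  (h z z.2).exists.choose_spec.2

theorem proj_eq {z : {z // infDist z A ≤ r}} {y : α} (hy : y ∈ A)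
    (hzy : dist (z : α) y = infDist (z : α) A) : (h.proj z : α) = y :=
  (h z z.2).unique ⟨(h.proj z).2, h.dist_proj z⟩ ⟨hy, hzy⟩

-- The only cluster point of `proj` at `z` is `proj z`, since `dist w (proj w) = infDist w A`
-- is a closed condition on `(w, proj w)`.
theorem continuous_proj (hA : IsCompact A) : Continuous h.proj := by
  refine Continuous.subtype_mk (continuous_iff_continuousAt.2 fun z => ?_) _
  refine hA.tendsto_nhds_of_unique_mapClusterPt (.of_forall fun w => (h.proj w).2)
    fun q hqA hq => (h.proj_eq hqA ?_).symm
  obtain ⟨U, hUz, hUq⟩ := mapClusterPt_iff_ultrafilter.1 hq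
  have hUz' : Tendsto (fun w : {z // infDist z A ≤ r} => (w : α)) U (𝓝 z) :=
    (continuous_subtype_val.tendsto z).mono_left hUz
  have hclosed : IsClosed {p : α × α | dist p.1 p.2 = infDist p.1 A} :=
    isClosed_eq (by fun_prop) (by fun_prop)
  exact hclosed.mem_of_tendsto (hUz'.prodMk_nhds hUq) (.of_forall h.dist_proj)

end HasReachAtLeast

end MetricSpace

section NormedSpace

variable {E : Type*} [NormedAddCommGroup E] [NormedSpace ℝ E]

theorem infDist_lineMap_le {A : Set E} {a b : E} (ha : a ∈ A) (hb : b ∈ A) {t : ℝ}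
    (ht : t ∈ Set.Icc (0 : ℝ) 1) : infDist (AffineMap.lineMap a b t) A ≤ dist a b / 2 := by
  rcases le_total t (1 / 2) with h | h
  · calc infDist (AffineMap.lineMap a b t) A ≤ dist (AffineMap.lineMap a b t) a :=
          infDist_le_dist_of_mem ha
      _ = t * dist a b := by rw [dist_lineMap_left, Real.norm_of_nonneg ht.1]
      _ ≤ dist a b / 2 := by nlinarith [dist_nonneg (x := a) (y := b)]
  · calc infDist (AffineMap.lineMap a b t) A ≤ dist (AffineMap.lineMap a b t) b :=
          infDist_le_dist_of_mem hb
      _ = (1 - t) * dist a b := by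
        rw [dist_lineMap_right, Real.norm_of_nonneg (by linarith [ht.2])]
      _ ≤ dist a b / 2 := by nlinarith [dist_nonneg (x := a) (y := b)]

theorem HasReachAtLeast.homotopic {A : Set E} {r : ℝ} (h : HasReachAtLeast A r)
    (hA : IsCompact A) {X : Type*} [TopologicalSpace X] (f g : C(X, A))
    (hfg : ∀ x, dist (f x) (g x) ≤ 2 * r) : f.Homotopic g := by
  have htube : ∀ p : unitInterval × X,
      infDist (AffineMap.lineMap (f p.2 : E) (g p.2) (p.1 : ℝ)) A ≤ r := fun p =>
    (infDist_lineMap_le (f p.2).2 (g p.2).2 p.1.2).trans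
      (by rw [← Subtype.dist_eq]; linarith [hfg p.2])
  refine ⟨{ toFun := fun p => h.proj ⟨_, htube p⟩
            continuous_toFun := (h.continuous_proj hA).comp (Continuous.subtype_mk ?_ _)
            map_zero_left := fun x => Subtype.ext (h.proj_eq (f x).2 ?_)
            map_one_left := fun x => Subtype.ext (h.proj_eq (g x).2 ?_) }⟩
  · fun_prop
  · simp [infDist_zero_of_mem (f x).2]
  · simp [infDist_zero_of_mem (g x).2]

theorem forall_infDist_le_of_homeomorph_circle {R₁ R₂ : Set E} (e₁ : R₁ ≃ₜ Circle)
    (e₂ : R₂ ≃ₜ Circle) {r₁ r₂ : ℝ} (h₁ : HasReachAtLeast R₁ r₁) (h₂ : HasReachAtLeast R₂ r₂)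
    {δ ε : ℝ} (hδ : ∀ y ∈ R₂, infDist y R₁ ≤ δ) (hε : ∀ x ∈ R₁, infDist x R₂ ≤ ε)
    (hδr : δ ≤ r₁) (hεr : ε ≤ r₂) : ∀ x ∈ R₁, infDist x R₂ ≤ δ := by
  by_contra! ⟨x₀, hx₀, hδx₀⟩
  have hc₁ : IsCompact R₁ := isCompact_iff_compactSpace.2 e₁.symm.compactSpace
  have hc₂ : IsCompact R₂ := isCompact_iff_compactSpace.2 e₂.symm.compactSpace
  let A : C(R₂, R₁) := ⟨fun y => h₁.proj ⟨y, (hδ y y.2).trans hδr⟩,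
    (h₁.continuous_proj hc₁).comp (continuous_subtype_val.subtype_mk _)⟩
  let B : C(R₁, R₂) := ⟨fun x => h₂.proj ⟨x, (hε x x.2).trans hεr⟩,
    (h₂.continuous_proj hc₂).comp (continuous_subtype_val.subtype_mk _)⟩
  have hA : ∀ y : R₂, dist (y : E) (A y) ≤ δ := fun y =>
    (h₁.dist_proj ⟨y, _⟩).trans_le (hδ y y.2)
  have hB : ∀ x : R₁, dist (x : E) (B x) ≤ ε := fun x =>
    (h₂.dist_proj ⟨x, _⟩).trans_le (hε x x.2)
  have hA_ne : ∀ y, A y ≠ ⟨x₀, hx₀⟩ := fun y hy => by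
    have hyx₀ : dist (y : E) x₀ ≤ δ := by simpa [hy] using hA y
    linarith [infDist_le_dist_of_mem (x := x₀) y.2, dist_comm (y : E) x₀]
  have hBA : (ContinuousMap.id R₂).Homotopic (B.comp A) := by
    refine h₂.homotopic hc₂ _ _ fun y => ?_
    have hx₀ε := hε x₀ hx₀
    calc dist (y : E) (B (A y)) ≤ dist (y : E) (A y) + dist ((A y : R₁) : E) (B (A y)) :=
          dist_triangle _ _ _
      _ ≤ 2 * r₂ := by linarith [hA y, hB (A y)]
  exact not_homotopic_id_of_forall_ne e₂ e₁ A B hA_ne hBA.symm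

end NormedSpace

section distPi

variable {d : ℕ} {A B : Set (EuclideanSpace ℝ (Fin d))}

theorem infDist_le_distPi (hB : IsCompact B) {x} (hx : x ∈ B) : infDist x A ≤ distPi A B := by
  obtain ⟨C, hC⟩ := hB.bddAbove_image (continuous_infDist_pt A).continuousOn
  refine le_ciSup₂ (f := fun x (_ : x ∈ B) => infDist x A) ⟨C, ?_⟩ x hx
  simp only [upperBounds, Set.mem_iUnion, Set.mem_range]
  rintro _ ⟨y, hy, rfl⟩
  exact hC ⟨y, hy, rfl⟩

theorem distPi_le {c : ℝ} (hc : 0 ≤ c) (h : ∀ x ∈ B, infDist x A ≤ c) : distPi A B ≤ c :=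
  Real.iSup_le (fun x => Real.iSup_le (h x) hc) hc

theorem distPi_nonneg : 0 ≤ distPi A B :=
  Real.iSup_nonneg fun _ => Real.iSup_nonneg fun _ => infDist_nonneg

end distPi

theorem stmt9_general (d : ℕ) (R₁ R₂ : Set (EuclideanSpace ℝ (Fin d)))
    (hR₁c : IsCompact R₁) (hR₂c : IsCompact R₂)
    (hcurve₁ : ∃ f : Metric.sphere (0 : EuclideanSpace ℝ (Fin 2)) 1 →
        EuclideanSpace ℝ (Fin d),
      Continuous f ∧ Function.Injective f ∧ R₁ = Set.range f)
    (hcurve₂ : ∃ f : Metric.sphere (0 : EuclideanSpace ℝ (Fin 2)) 1 →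
        EuclideanSpace ℝ (Fin d),
      Continuous f ∧ Function.Injective f ∧ R₂ = Set.range f)
    (r₁ r₂ : ℝ) (hr₁ : 0 < r₁) (hr₂ : 0 < r₂)
    (hreach₁ : ∀ z : EuclideanSpace ℝ (Fin d), Metric.infDist z R₁ ≤ r₁ →
      ∃! y, y ∈ R₁ ∧ dist z y = Metric.infDist z R₁)
    (hreach₂ : ∀ z : EuclideanSpace ℝ (Fin d), Metric.infDist z R₂ ≤ r₂ →
      ∃! y, y ∈ R₂ ∧ dist z y = Metric.infDist z R₂)
    (hclose : hausDist R₁ R₂ < (2 - Real.sqrt 2) * min r₁ r₂) :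
    distPi R₂ R₁ = distPi R₁ R₂ ∧ distPi R₁ R₂ = hausDist R₁ R₂ := by
  obtain ⟨e₁⟩ := nonempty_homeomorph_circle_of_range hcurve₁
  obtain ⟨e₂⟩ := nonempty_homeomorph_circle_of_range hcurve₂
  have hsmall : hausDist R₁ R₂ ≤ min r₁ r₂ := by
    have : 1 ≤ Real.sqrt 2 := Real.one_le_sqrt.2 (by norm_num)
    nlinarith [lt_min hr₁ hr₂]
  have hδ : distPi R₁ R₂ ≤ min r₁ r₂ := (le_max_left _ _).trans hsmall
  have hε : distPi R₂ R₁ ≤ min r₁ r₂ := (le_max_right _ _).trans hsmall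
  have h₁₂ := forall_infDist_le_of_homeomorph_circle e₁ e₂ hreach₁ hreach₂
    (fun y hy => infDist_le_distPi hR₂c hy) (fun x hx => infDist_le_distPi hR₁c hx)
    (hδ.trans (min_le_left _ _)) (hε.trans (min_le_right _ _))
  have h₂₁ := forall_infDist_le_of_homeomorph_circle e₂ e₁ hreach₂ hreach₁
    (fun x hx => infDist_le_distPi hR₁c hx) (fun y hy => infDist_le_distPi hR₂c hy)
    (hε.trans (min_le_right _ _)) (hδ.trans (min_le_left _ _))
  have heq : distPi R₂ R₁ = distPi R₁ R₂ :=
    le_antisymm (distPi_le distPi_nonneg h₁₂) (distPi_le distPi_nonneg h₂₁)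
  exact ⟨heq, by rw [hausDist, heq, max_self]⟩

/-- Lemma 7: let `R₁`, `R₂` be two closed non-self-intersecting curves (images of
continuous injective maps from the circle) with reach at least `r₁`, `r₂ > 0`
respectively. If `Haus(R₁, R₂) < (2 − √2) min{r₁, r₂}`, then the quasi-Hausdorff
distances in both directions agree with the Hausdorff distance. -/
theorem stmt9 (d : ℕ) (R₁ R₂ : Set (EuclideanSpace ℝ (Fin d)))
    (hR₁ne : R₁.Nonempty) (hR₂ne : R₂.Nonempty)
    (hR₁c : IsCompact R₁) (hR₂c : IsCompact R₂)
    (hcurve₁ : ∃ f : Metric.sphere (0 : EuclideanSpace ℝ (Fin 2)) 1 →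
        EuclideanSpace ℝ (Fin d),
      Continuous f ∧ Function.Injective f ∧ R₁ = Set.range f)
    (hcurve₂ : ∃ f : Metric.sphere (0 : EuclideanSpace ℝ (Fin 2)) 1 →
        EuclideanSpace ℝ (Fin d),
      Continuous f ∧ Function.Injective f ∧ R₂ = Set.range f)
    (r₁ r₂ : ℝ) (hr₁ : 0 < r₁) (hr₂ : 0 < r₂)
    (hreach₁ : ∀ z : EuclideanSpace ℝ (Fin d), Metric.infDist z R₁ ≤ r₁ →
      ∃! y, y ∈ R₁ ∧ dist z y = Metric.infDist z R₁)
    (hreach₂ : ∀ z : EuclideanSpace ℝ (Fin d), Metric.infDist z R₂ ≤ r₂ →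
      ∃! y, y ∈ R₂ ∧ dist z y = Metric.infDist z R₂)
    (hclose : hausDist R₁ R₂ < (2 - Real.sqrt 2) * min r₁ r₂) :
    distPi R₂ R₁ = distPi R₁ R₂ ∧ distPi R₁ R₂ = hausDist R₁ R₂ :=
  stmt9_general d R₁ R₂ hR₁c hR₂c hcurve₁ hcurve₂ r₁ r₂ hr₁ hr₂ hreach₁ hreach₂ hclose
end
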